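/- Gradient descent with step size η ≤ 1/M on an m-strongly convex and M-smooth function L : ℝ^p → ℝ with minimizer θ* satisfies, for the iterates θ^{(j+1)} = θ^{(j)} - η∇L(θ^{(j)}), the bound ‖θ^{(j)} - θ*‖² ≤ (1 - ηm)^j · (2/m)(L(θ^{(0)}) - L(θ*)). -/
import Mathlib


open scoped RealInnerProductSpace

theorem stmt_16 {p : ℕ} (L : EuclideanSpace ℝ (Fin p) → ℝ)
    (m M η : ℝ) (hm : 0 < m) (hmM : m ≤ M) (hη : η ∈ Set.Ioc (0 : ℝ) (1 / M))
    (hdiff : Differentiable ℝ L)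
    (hsc : ∀ x y, L y ≥ L x + ⟪gradient L x, y - x⟫ + (m / 2) * ‖y - x‖ ^ 2)
    (hsm : ∀ x y, L y ≤ L x + ⟪gradient L x, y - x⟫ + (M / 2) * ‖y - x‖ ^ 2)
    (θstar : EuclideanSpace ℝ (Fin p)) (hmin : ∀ x, L θstar ≤ L x)
    (θ : ℕ → EuclideanSpace ℝ (Fin p))
    (hstep : ∀ j, θ (j + 1) = θ j - η • gradient L (θ j)) :
    ∀ j, ‖θ j - θstar‖ ^ 2 ≤ (1 - η * m) ^ j * (2 / m) * (L (θ 0) - L θstar) := by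
  obtain ⟨hη0, hη1⟩ := hη
  have hM : (0:ℝ) < M := lt_of_lt_of_le hm hmM
  have hηM : η * M ≤ 1 := by
    rw [le_div_iff₀ hM] at hη1; linarith
  have hηm : η * m ≤ 1 := le_trans (by nlinarith) hηM
  -- gradient at θstar is zero
  have hgrad0 : gradient L θstar = 0 := by
    have h1 := hsm θstar (θstar - η • gradient L θstar)
    have h2 := hmin (θstar - η • gradient L θstar)
    have hd : θstar - η • gradient L θstar - θstar = -(η • gradient L θstar) := by abel
    rw [hd, inner_neg_right, real_inner_smul_right, real_inner_self_eq_norm_sq,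
      norm_neg, norm_smul, Real.norm_eq_abs, abs_of_pos hη0] at h1
    have hA := mul_le_mul_of_nonneg_right hηM
      (by positivity : (0:ℝ) ≤ η * ‖gradient L θstar‖ ^ 2)
    have ht : ‖gradient L θstar‖ ^ 2 ≤ 0 := by nlinarith [h1, h2, hA, hη0]
    have : ‖gradient L θstar‖ = 0 := by nlinarith [norm_nonneg (gradient L θstar)]
    exact norm_eq_zero.mp this
  -- PL inequality (division-free form)
  have hPL : ∀ x, 2 * m * (L x - L θstar) ≤ ‖gradient L x‖ ^ 2 := by
    intro x
    have h := hsc x θstar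
    have hsq : (0:ℝ) ≤ ‖gradient L x + m • (θstar - x)‖ ^ 2 := sq_nonneg _
    rw [norm_add_sq_real, real_inner_smul_right, norm_smul, Real.norm_eq_abs,
      abs_of_pos hm] at hsq
    nlinarith [h, hsq, hm]
  -- descent step
  have hdesc : ∀ j, L (θ (j+1)) - L θstar ≤ (1 - η*m) * (L (θ j) - L θstar) := by
    intro j
    have h := hsm (θ j) (θ (j+1))
    rw [hstep j] at h ⊢
    have hd : θ j - η • gradient L (θ j) - θ j = -(η • gradient L (θ j)) := by abel
    rw [hd, inner_neg_right, real_inner_smul_right, real_inner_self_eq_norm_sq,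
      norm_neg, norm_smul, Real.norm_eq_abs, abs_of_pos hη0] at h
    have hpl := hPL (θ j)
    have hA := mul_le_mul_of_nonneg_right hηM
      (by positivity : (0:ℝ) ≤ η * ‖gradient L (θ j)‖ ^ 2)
    have hB := mul_le_mul_of_nonneg_left hpl (by positivity : (0:ℝ) ≤ η/2)
    nlinarith [h, hA, hB]
  -- geometric decay by induction
  have hgeo : ∀ j, L (θ j) - L θstar ≤ (1 - η*m)^j * (L (θ 0) - L θstar) := by
    intro j
    induction j with
    | zero => simp
    | succ n ih =>
      have h1 := hdesc n
      have h2 : (0:ℝ) ≤ 1 - η*m := by linarith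
      calc L (θ (n+1)) - L θstar ≤ (1 - η*m) * (L (θ n) - L θstar) := h1
        _ ≤ (1 - η*m) * ((1 - η*m)^n * (L (θ 0) - L θstar)) :=
            mul_le_mul_of_nonneg_left ih h2
        _ = (1 - η*m)^(n+1) * (L (θ 0) - L θstar) := by ring
  intro j
  have h := hsc θstar (θ j)
  rw [hgrad0] at h
  simp only [inner_zero_left] at h
  have h2 : ‖θ j - θstar‖^2 ≤ (2/m) * (L (θ j) - L θstar) := by
    rw [div_mul_eq_mul_div, le_div_iff₀ hm]
    linarith
  calc ‖θ j - θstar‖^2 ≤ (2/m) * (L (θ j) - L θstar) := h2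
    _ ≤ (2/m) * ((1 - η*m)^j * (L (θ 0) - L θstar)) :=
        mul_le_mul_of_nonneg_left (hgeo j) (by positivity)
    _ = (1 - η*m)^j * (2/m) * (L (θ 0) - L θstar) := by ring
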